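/- Let ε > 0 and define C₁ = sup{ ‖p‖_{[-1,1],∞} : p ∈ span{ζ_i : σ_i > ε}, ‖p‖_{m,∞} ≤ 1 }. Then C₁ ≤ C(m,n,γ, ε / (√2 · c_{n,γ,α,β})). -/

import Mathlib

open MeasureTheory Finset

noncomputable section

/-- The equispaced node `x_k = -1 + 2k/m` in `[-1,1]`. -/
def node (m k : ℕ) : ℝ := -1 + 2 * (k : ℝ) / (m : ℝ)

/-- The discrete semi-inner product `⟨f,g⟩_{m,2} = (2/(m+1)) Σ_{k=0}^m f(x_k) conj(g(x_k))`. -/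
def discInner (m : ℕ) (f g : ℝ → ℂ) : ℂ :=
  (2 / ((m : ℂ) + 1)) * ∑ k ∈ Finset.range (m + 1), f (node m k) * (starRingEnd ℂ) (g (node m k))

/-- The discrete `ℓ²` semi-norm `‖f‖_{m,2}`. -/
def discNorm (m : ℕ) (f : ℝ → ℂ) : ℝ :=
  Real.sqrt ((2 / ((m : ℝ) + 1)) * ∑ k ∈ Finset.range (m + 1), ‖f (node m k)‖ ^ 2)

/-- The discrete sup semi-norm `‖f‖_{m,∞} = max_{0 ≤ k ≤ m} |f(x_k)|`. -/
def discSup (m : ℕ) (f : ℝ → ℂ) : ℝ :=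
  ⨆ k : Fin (m + 1), ‖f (node m (k : ℕ))‖

/-- The uniform norm `‖f‖_{I,∞} = sup_{x ∈ I} |f(x)|`. -/
def supNorm (I : Set ℝ) (f : ℝ → ℂ) : ℝ :=
  ⨆ x : I, ‖f (x : ℝ)‖

/-- The Jacobi-type weight `w_γ^{(α,β)}(x) = (1 - x/γ)^α (1 + x/γ)^β`. -/
def jweight (α β γ x : ℝ) : ℝ := (1 - x / γ) ^ α * (1 + x / γ) ^ β

/-- The weighted `L²` inner product `⟨f,g⟩_w = ∫_{-γ}^{γ} f conj(g) w_γ^{(α,β)}`. -/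
def wInner (α β γ : ℝ) (f g : ℝ → ℂ) : ℂ :=
  ∫ x in (-γ)..γ, f x * (starRingEnd ℂ) (g x) * ((jweight α β γ x : ℝ) : ℂ)

/-- The weighted `L²` norm `‖f‖_w`. -/
def wNorm (α β γ : ℝ) (f : ℝ → ℂ) : ℝ :=
  Real.sqrt (∫ x in (-γ)..γ, ‖f x‖ ^ 2 * jweight α β γ x)

/-- `h₀^{(α,β)} = 2^{α+β+1} Γ(α+1) Γ(β+1) / ((α+β+1) Γ(α+β+1))`. -/
def h0 (α β : ℝ) : ℝ :=
  2 ^ (α + β + 1) * Real.Gamma (α + 1) * Real.Gamma (β + 1) /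
    ((α + β + 1) * Real.Gamma (α + β + 1))

/-- A complex polynomial regarded as a function of a real variable. -/
def pf (p : Polynomial ℂ) : ℝ → ℂ := fun x => p.eval (x : ℂ)

/-- The constant `c_{n,γ,α,β} = max_{x ∈ [-γ,γ]} (Σ_{i=0}^n |φ_i(x)|²)^{1/2}`. -/
def cConst (n : ℕ) (γ : ℝ) (φ : ℕ → Polynomial ℂ) : ℝ :=
  ⨆ x : Set.Icc (-γ) γ,
    Real.sqrt (∑ i ∈ Finset.range (n + 1), ‖pf (φ i) (x : ℝ)‖ ^ 2)

/-- The regularized frame approximation operator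
`Q_δ(f) = Σ_{i : σ_i > δ} σ_i^{-2} ⟨f,ζ_i⟩_{m,2} ζ_i`. -/
def Qop (m n : ℕ) (ζ : Fin (n + 1) → Polynomial ℂ) (σ : Fin (n + 1) → ℝ) (δ : ℝ)
    (f : ℝ → ℂ) : ℝ → ℂ :=
  fun x => ∑ i ∈ Finset.univ.filter (fun i : Fin (n + 1) => δ < σ i),
    (discInner m f (pf (ζ i)) / ((σ i ^ 2 : ℝ) : ℂ)) * pf (ζ i) x

/-- The quantity `C(m,n,γ,δ) = sup{‖p‖_{[-1,1],∞} : p ∈ P_n, ‖p‖_{m,∞} ≤ 1,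
‖p‖_{[-γ,γ],∞} ≤ δ⁻¹}`. -/
def Cquant (m n : ℕ) (γ δ : ℝ) : ℝ :=
  sSup {r : ℝ | ∃ p : Polynomial ℂ, p.natDegree ≤ n ∧ discSup m (pf p) ≤ 1 ∧
    supNorm (Set.Icc (-γ) γ) (pf p) ≤ δ⁻¹ ∧ r = supNorm (Set.Icc (-1) 1) (pf p)}

/-- The constant `C₁ = sup{‖p‖_{[-1,1],∞} : p ∈ span{ζ_i : σ_i > ε}, ‖p‖_{m,∞} ≤ 1}`. -/
def C1const (m n : ℕ) (ζ : Fin (n + 1) → Polynomial ℂ) (σ : Fin (n + 1) → ℝ) (ε : ℝ) : ℝ :=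
  sSup {r : ℝ | ∃ p : Polynomial ℂ, p ∈ Submodule.span ℂ (ζ '' {i | ε < σ i}) ∧
    discSup m (pf p) ≤ 1 ∧ r = supNorm (Set.Icc (-1) 1) (pf p)}

/-- The constant `C₂ = sup{‖p - Q_ε(p)‖_{[-1,1],∞} : p ∈ P_n, ‖p‖_{[-γ,γ],∞} ≤ ε⁻¹}`. -/
def C2const (m n : ℕ) (γ : ℝ) (ζ : Fin (n + 1) → Polynomial ℂ) (σ : Fin (n + 1) → ℝ)
    (ε : ℝ) : ℝ :=
  sSup {r : ℝ | ∃ p : Polynomial ℂ, p.natDegree ≤ n ∧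
    supNorm (Set.Icc (-γ) γ) (pf p) ≤ ε⁻¹ ∧
    r = supNorm (Set.Icc (-1) 1) (fun x => pf p x - Qop m n ζ σ ε (pf p) x)}

/-- The condition number `κ(Q_δ) = sup{‖Q_δ(q)‖_{[-1,1],∞} : q ∈ C([-1,1]), ‖q‖_{m,∞} ≤ 1}`. -/
def kappa (m n : ℕ) (ζ : Fin (n + 1) → Polynomial ℂ) (σ : Fin (n + 1) → ℝ) (δ : ℝ) : ℝ :=
  sSup {r : ℝ | ∃ q : ℝ → ℂ, ContinuousOn q (Set.Icc (-1) 1) ∧ discSup m q ≤ 1 ∧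
    r = supNorm (Set.Icc (-1) 1) (Qop m n ζ σ δ q)}

/-- The Bernstein ellipse `E_θ = {(z + z⁻¹)/2 : 1 ≤ |z| ≤ θ}`. -/
def bernsteinEllipse (θ : ℝ) : Set ℂ :=
  {w | ∃ z : ℂ, 1 ≤ ‖z‖ ∧ ‖z‖ ≤ θ ∧ w = (z + z⁻¹) / 2}

/-- The uniform norm on a subset of `ℂ`. -/
def supNormC (E : Set ℂ) (f : ℂ → ℂ) : ℝ :=
  ⨆ z : E, ‖f (z : ℂ)‖

/-- The `C^k` norm `‖f‖_{C^k([-1,1])} = max_{0 ≤ j ≤ k} ‖f^{(j)}‖_{[-1,1],∞}`. -/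
def CkNorm (k : ℕ) (f : ℝ → ℂ) : ℝ :=
  ⨆ j : Fin (k + 1), supNorm (Set.Icc (-1) 1) (iteratedDerivWithin (j : ℕ) f (Set.Icc (-1) 1))

/-!
Write `p = ∑ aᵢ ζᵢ` with `aᵢ = 0` unless `σᵢ > ε`. The two orthogonality relations of the `ζᵢ` give
`ε² ‖p‖_w² ≤ ∑ |aᵢ|² σᵢ² = ‖p‖_{m,2}² ≤ 2 ‖p‖_{m,∞}² ≤ 2`. Expanding `p` in the orthonormal basis
`φ₀, …, φₙ` of `P_n`, Cauchy–Schwarz gives `|p(x)| ≤ ‖p‖_w (∑ |φᵢ(x)|²)^{1/2} ≤ √2 c / ε` on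
`[-γ, γ]`, so `p` is admissible for `C(m, n, γ, ε / (√2 c))`. That admissible set is bounded above
since `‖q‖_{[-1,1],∞} ≤ ‖q‖_{[-γ,γ],∞}`.
-/

open Polynomial

lemma intervalIntegrable_one_add_div_rpow {r c : ℝ} (hr : -1 < r) (hc : c ≠ 0) (a b : ℝ) :
    IntervalIntegrable (fun x => (1 + x / c) ^ r) volume a b := by
  have h := ((intervalIntegral.intervalIntegrable_rpow' hr (a := 1 + a / c)
    (b := 1 + b / c)).comp_add_left 1).comp_mul_left (c := c⁻¹)
  simpa [div_eq_inv_mul, hc] using h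

lemma intervalIntegrable_jweight {α β γ : ℝ} (hα : -1 < α) (hβ : -1 < β) (hγ : 0 < γ) :
    IntervalIntegrable (jweight α β γ) volume (-γ) γ := by
  have hleft : IntervalIntegrable (jweight α β γ) volume (-γ) 0 := by
    refine (intervalIntegrable_one_add_div_rpow hβ hγ.ne' _ _).continuousOn_mul ?_
    refine ContinuousOn.rpow_const (by fun_prop) fun x hx => Or.inl ?_
    rw [Set.uIcc_of_le (by linarith)] at hx
    have : x / γ ≤ 0 := div_nonpos_of_nonpos_of_nonneg hx.2 hγ.le
    linarith
  have hright : IntervalIntegrable (jweight α β γ) volume 0 γ := by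
    have h := intervalIntegrable_one_add_div_rpow hα (neg_ne_zero.2 hγ.ne') 0 γ
    simp only [div_neg, ← sub_eq_add_neg] at h
    refine h.mul_continuousOn (ContinuousOn.rpow_const (by fun_prop) fun x hx => Or.inl ?_)
    rw [Set.uIcc_of_le hγ.le] at hx
    have : 0 ≤ x / γ := div_nonneg hx.1 hγ.le
    linarith
  exact hleft.trans hright

@[fun_prop]
lemma continuous_pf (p : ℂ[X]) : Continuous (pf p) :=
  p.continuous.comp Complex.continuous_ofReal

lemma pf_add (p q : ℂ[X]) : pf (p + q) = pf p + pf q := by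
  ext x; simp [pf]

lemma pf_smul (c : ℂ) (p : ℂ[X]) : pf (c • p) = c • pf p := by
  ext x; simp [pf]

lemma pf_sum {ι : Type*} (s : Finset ι) (P : ι → ℂ[X]) : pf (∑ i ∈ s, P i) = ∑ i ∈ s, pf (P i) := by
  ext x; simp [pf, eval_finsetSum]

def discForm (m : ℕ) : ℂ[X] →ₗ[ℂ] ℂ[X] →ₗ⋆[ℂ] ℂ :=
  LinearMap.mk₂'ₛₗ (RingHom.id ℂ) (starRingEnd ℂ) (fun p q => discInner m (pf p) (pf q))
    (fun p p' q => by
      simp only [discInner, pf_add, Pi.add_apply, add_mul, sum_add_distrib, mul_add])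
    (fun c p q => by
      simp only [discInner, pf_smul, Pi.smul_apply, smul_eq_mul, mul_sum, RingHom.id_apply]
      exact sum_congr rfl fun k _ => by ring)
    (fun p q q' => by
      simp only [discInner, pf_add, Pi.add_apply, map_add, mul_add, sum_add_distrib])
    (fun c p q => by
      simp only [discInner, pf_smul, Pi.smul_apply, smul_eq_mul, map_mul, mul_sum]
      exact sum_congr rfl fun k _ => by ring)

@[simp]
lemma discForm_apply (m : ℕ) (p q : ℂ[X]) : discForm m p q = discInner m (pf p) (pf q) := rfl

def wForm {α β γ : ℝ} (hw : IntervalIntegrable (jweight α β γ) volume (-γ) γ) :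
    ℂ[X] →ₗ[ℂ] ℂ[X] →ₗ⋆[ℂ] ℂ :=
  have hint : ∀ p q : ℂ[X], IntervalIntegrable
      (fun x => pf p x * (starRingEnd ℂ) (pf q x) * ((jweight α β γ x : ℝ) : ℂ)) volume (-γ) γ :=
    fun p q => IntervalIntegrable.continuousOn_mul ⟨hw.1.ofReal, hw.2.ofReal⟩
      ((continuous_pf p).mul (Complex.continuous_conj.comp (continuous_pf q))).continuousOn
  LinearMap.mk₂'ₛₗ (RingHom.id ℂ) (starRingEnd ℂ) (fun p q => wInner α β γ (pf p) (pf q))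
    (fun p p' q => by
      simp only [wInner, pf_add, Pi.add_apply, add_mul]
      exact intervalIntegral.integral_add (hint p q) (hint p' q))
    (fun c p q => by
      simp only [wInner, pf_smul, Pi.smul_apply, smul_eq_mul, mul_assoc, RingHom.id_apply]
      exact intervalIntegral.integral_const_mul _ _)
    (fun p q q' => by
      simp only [wInner, pf_add, Pi.add_apply, map_add, mul_add, add_mul]
      exact intervalIntegral.integral_add (hint p q) (hint p q'))
    (fun c p q => by
      simp only [wInner, pf_smul, Pi.smul_apply, smul_eq_mul, map_mul]
      rw [← intervalIntegral.integral_const_mul]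
      congr 1; ext x; ring)

lemma exists_sum_smul_eq_of_mem_span_image {R M ι : Type*} [Semiring R] [AddCommMonoid M]
    [Module R M] [Fintype ι] {s : Set ι} {v : ι → M} {x : M}
    (hx : x ∈ Submodule.span R (v '' s)) :
    ∃ a : ι → R, (∀ i ∉ s, a i = 0) ∧ ∑ i, a i • v i = x := by
  obtain ⟨l, hl, rfl⟩ := (Finsupp.mem_span_image_iff_linearCombination R).1 hx
  exact ⟨l, (Finsupp.mem_supported' R l).1 hl,
    by rw [Finsupp.linearCombination_apply, Finsupp.sum_fintype _ _ fun i => zero_smul R (v i)]⟩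

section SesqForm

variable {M ι : Type*} [AddCommMonoid M] [Module ℂ M] [Fintype ι]

lemma sesqForm_sum_smul_self [DecidableEq ι] (B : M →ₗ[ℂ] M →ₗ⋆[ℂ] ℂ) {v : ι → M} {d : ι → ℂ}
    (hv : ∀ i j, B (v i) (v j) = if i = j then d i else 0) (a : ι → ℂ) :
    B (∑ i, a i • v i) (∑ i, a i • v i) = ∑ i, (‖a i‖ ^ 2 : ℂ) * d i := by
  simp only [map_sum, map_smul, LinearMap.map_smulₛₗ, LinearMap.coe_sum, LinearMap.coe_smul,
    Finset.sum_apply, Pi.smul_apply, hv, smul_eq_mul, mul_ite, mul_zero, sum_ite_eq', mem_univ,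
    ↓reduceIte]
  refine sum_congr rfl fun i _ => ?_
  rw [← Complex.mul_conj']
  ring

lemma sq_mul_re_le_re_of_mem_span_image [DecidableEq ι] (B₁ B₂ : M →ₗ[ℂ] M →ₗ⋆[ℂ] ℂ)
    {ζ : ι → M} {σ : ι → ℝ}
    (h₁ : ∀ i j, B₁ (ζ i) (ζ j) = if i = j then 1 else 0)
    (h₂ : ∀ i j, B₂ (ζ i) (ζ j) = if i = j then ((σ i ^ 2 : ℝ) : ℂ) else 0)
    {ε : ℝ} (hε : 0 ≤ ε) {p : M} (hp : p ∈ Submodule.span ℂ (ζ '' {i | ε < σ i})) :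
    ε ^ 2 * (B₁ p p).re ≤ (B₂ p p).re := by
  obtain ⟨a, ha, rfl⟩ := exists_sum_smul_eq_of_mem_span_image hp
  rw [sesqForm_sum_smul_self B₁ (d := fun _ => 1) h₁, sesqForm_sum_smul_self B₂ h₂]
  norm_cast
  simp only [mul_one]
  rw [mul_sum]
  refine sum_le_sum fun i _ => ?_
  by_cases hi : ε < σ i
  · rw [mul_comm]
    gcongr
  · simp [ha i hi]

end SesqForm

lemma natDegree_le_of_mem_span {R : Type*} [Semiring R] {S : Set R[X]} {n : ℕ}
    (hS : ∀ q ∈ S, q.natDegree ≤ n) {p : R[X]} (hp : p ∈ Submodule.span R S) : p.natDegree ≤ n :=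
  natDegree_le_iff_degree_le.2 <| mem_degreeLE.1 <|
    Submodule.span_le.2 (fun q hq => mem_degreeLE.2 (natDegree_le_iff_degree_le.1 (hS q hq))) hp

lemma span_eq_degreeLT_of_linearIndependent {K : Type*} [Field K] {n : ℕ} {v : Fin n → K[X]}
    (hv : LinearIndependent K v) (hdeg : ∀ i, (v i).degree < n) :
    Submodule.span K (Set.range v) = degreeLT K n :=
  Submodule.eq_of_le_of_finrank_eq
    (Submodule.span_le.2 (Set.range_subset_iff.2 fun i => mem_degreeLT.2 (hdeg i)))
    (by rw [finrank_span_eq_card hv, Fintype.card_fin, (degreeLTEquiv K n).finrank_eq,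
      Module.finrank_fin_fun])

lemma norm_pf_sum_smul_le {ι : Type*} [Fintype ι] (b : ι → ℂ) (v : ι → ℂ[X]) (x : ℝ) :
    ‖pf (∑ i, b i • v i) x‖ ≤ √(∑ i, ‖b i‖ ^ 2) * √(∑ i, ‖pf (v i) x‖ ^ 2) := by
  rw [pf_sum, Finset.sum_apply]
  calc ‖∑ i, pf (b i • v i) x‖ ≤ ∑ i, ‖b i‖ * ‖pf (v i) x‖ := by
        refine (norm_sum_le _ _).trans_eq (sum_congr rfl fun i _ => ?_)
        rw [pf_smul, Pi.smul_apply, smul_eq_mul, norm_mul]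
    _ ≤ _ := Real.sum_mul_le_sqrt_mul_sqrt _ _ _

lemma norm_pf_le_of_orthonormal (B : ℂ[X] →ₗ[ℂ] ℂ[X] →ₗ⋆[ℂ] ℂ) {n : ℕ} {φ : ℕ → ℂ[X]}
    (hdeg : ∀ i ≤ n, (φ i).natDegree = i)
    (horth : ∀ i ≤ n, ∀ j ≤ n, B (φ i) (φ j) = if i = j then 1 else 0)
    {p : ℂ[X]} (hp : p.natDegree ≤ n) (x : ℝ) :
    ‖pf p x‖ ≤ √(B p p).re * √(∑ i ∈ range (n + 1), ‖pf (φ i) x‖ ^ 2) := by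
  set v : Fin (n + 1) → ℂ[X] := fun i => φ i
  have hv : ∀ i j, B (v i) (v j) = if i = j then 1 else 0 := fun i j => by
    simp [v, horth i (Nat.le_of_lt_succ i.2) j (Nat.le_of_lt_succ j.2), Fin.val_inj]
  have hli : LinearIndependent ℂ v :=
    LinearMap.linearIndependent_of_isOrthoᵢ (fun i j hij => by simpa [hij] using hv i j)
      (fun i => by simp [hv])
  have hspan := span_eq_degreeLT_of_linearIndependent hli fun i =>
    degree_le_natDegree.trans_lt (by rw [hdeg i (Nat.le_of_lt_succ i.2)]; exact_mod_cast i.2)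
  have hpmem : p ∈ degreeLT ℂ (n + 1) :=
    mem_degreeLT.2 (degree_le_natDegree.trans_lt (by exact_mod_cast Nat.lt_succ_of_le hp))
  rw [← hspan] at hpmem
  obtain ⟨b, rfl⟩ := (Submodule.mem_span_range_iff_exists_fun ℂ).1 hpmem
  rw [sesqForm_sum_smul_self B (d := fun _ => 1) hv, ← Fin.sum_univ_eq_sum_range]
  norm_cast
  simpa only [mul_one] using norm_pf_sum_smul_le b v x

lemma le_iSup_of_continuousOn {X : Type*} [TopologicalSpace X] {K : Set X} (hK : IsCompact K)
    {g : X → ℝ} (hg : ContinuousOn g K) {x : X} (hx : x ∈ K) : g x ≤ ⨆ y : K, g y :=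
  le_ciSup (by simpa only [Set.image_eq_range] using hK.bddAbove_image hg) (⟨x, hx⟩ : K)

lemma supNorm_le {I : Set ℝ} {f : ℝ → ℂ} {C : ℝ} (hC : 0 ≤ C) (h : ∀ x ∈ I, ‖f x‖ ≤ C) :
    supNorm I f ≤ C :=
  Real.iSup_le (fun x => h x x.2) hC

lemma supNorm_le_supNorm {I J : Set ℝ} {f : ℝ → ℂ} (hJ : IsCompact J) (hf : ContinuousOn f J)
    (hIJ : I ⊆ J) : supNorm I f ≤ supNorm J f :=
  supNorm_le (Real.iSup_nonneg fun _ => norm_nonneg _) fun _ hx =>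
    le_iSup_of_continuousOn hJ hf.norm (hIJ hx)

lemma discInner_self (m : ℕ) (f : ℝ → ℂ) : discInner m f f = ((discNorm m f ^ 2 : ℝ) : ℂ) := by
  rw [discNorm, Real.sq_sqrt (by positivity), discInner]
  push_cast
  simp [Complex.mul_conj']

lemma discNorm_le_sqrt_two_mul_discSup (m : ℕ) (f : ℝ → ℂ) :
    discNorm m f ≤ √2 * discSup m f := by
  have hle : ∀ k ∈ range (m + 1), ‖f (node m k)‖ ≤ discSup m f := fun k hk =>
    le_ciSup (f := fun j : Fin (m + 1) => ‖f (node m j)‖) (Set.finite_range _).bddAbove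
      ⟨k, mem_range.1 hk⟩
  have hnonneg : 0 ≤ discSup m f := (norm_nonneg _).trans (hle 0 (by simp))
  rw [discNorm, ← Real.sqrt_sq hnonneg, ← Real.sqrt_mul zero_le_two]
  apply Real.sqrt_le_sqrt
  calc 2 / ((m : ℝ) + 1) * ∑ k ∈ range (m + 1), ‖f (node m k)‖ ^ 2
      ≤ 2 / ((m : ℝ) + 1) * ∑ k ∈ range (m + 1), discSup m f ^ 2 := by
        gcongr with k hk
        exact hle k hk
    _ = 2 * discSup m f ^ 2 := by
        rw [sum_const, card_range, nsmul_eq_mul]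
        field_simp
        push_cast
        ring

lemma sqrt_re_wForm_self_le {α β γ : ℝ} (hw : IntervalIntegrable (jweight α β γ) volume (-γ) γ)
    {m : ℕ} {ι : Type*} [Fintype ι] [DecidableEq ι] {ζ : ι → ℂ[X]} {σ : ι → ℝ}
    (hζw : ∀ i j, wInner α β γ (pf (ζ i)) (pf (ζ j)) = if i = j then 1 else 0)
    (hζd : ∀ i j, discInner m (pf (ζ i)) (pf (ζ j)) = if i = j then ((σ i ^ 2 : ℝ) : ℂ) else 0)
    {ε : ℝ} (hε : 0 < ε) {p : ℂ[X]} (hp : p ∈ Submodule.span ℂ (ζ '' {i | ε < σ i})) :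
    √(wForm hw p p).re ≤ √2 / ε * discSup m (pf p) := by
  have h := sq_mul_re_le_re_of_mem_span_image (wForm hw) (discForm m) hζw hζd hε.le hp
  rw [discForm_apply, discInner_self, Complex.ofReal_re] at h
  rw [div_mul_eq_mul_div, le_div_iff₀ hε, mul_comm, ← Real.sqrt_sq hε.le,
    ← Real.sqrt_mul (sq_nonneg ε)]
  calc √(ε ^ 2 * (wForm hw p p).re) ≤ √(discNorm m (pf p) ^ 2) := Real.sqrt_le_sqrt h
    _ = discNorm m (pf p) := Real.sqrt_sq (Real.sqrt_nonneg _)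
    _ ≤ √2 * discSup m (pf p) := discNorm_le_sqrt_two_mul_discSup m _

theorem stmt12_general (α β γ : ℝ) (hα : -1 < α) (hβ : -1 < β) (hγ : 1 < γ)
    (m n : ℕ)
    (ζ : Fin (n + 1) → Polynomial ℂ) (σ : Fin (n + 1) → ℝ)
    (hζdeg : ∀ i, (ζ i).natDegree ≤ n)
    (hζw : ∀ i j, wInner α β γ (pf (ζ i)) (pf (ζ j)) = if i = j then 1 else 0)
    (hζd : ∀ i j, discInner m (pf (ζ i)) (pf (ζ j)) =
      if i = j then (((σ i) ^ 2 : ℝ) : ℂ) else 0)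
    (φ : ℕ → Polynomial ℂ) (hφdeg : ∀ i ≤ n, (φ i).natDegree = i)
    (hφorth : ∀ i ≤ n, ∀ j ≤ n,
      wInner α β γ (pf (φ i)) (pf (φ j)) = if i = j then 1 else 0)
    (ε : ℝ) (hε : 0 < ε) :
    C1const m n ζ σ ε ≤ Cquant m n γ (ε / (Real.sqrt 2 * cConst n γ φ)) := by
  have hw := intervalIntegrable_jweight hα hβ (by linarith : (0 : ℝ) < γ)
  have hsub : Set.Icc (-1 : ℝ) 1 ⊆ Set.Icc (-γ) γ := Set.Icc_subset_Icc (by linarith) hγ.le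
  refine csSup_le_csSup ⟨(ε / (√2 * cConst n γ φ))⁻¹, ?_⟩
    ⟨_, 0, zero_mem _, Real.iSup_le (fun _ => by simp [pf]) zero_le_one, rfl⟩ ?_
  · rintro r ⟨p, -, -, hp, rfl⟩
    exact (supNorm_le_supNorm isCompact_Icc (continuous_pf p).continuousOn hsub).trans hp
  rintro r ⟨p, hp, hpd, rfl⟩
  have hdeg : p.natDegree ≤ n :=
    natDegree_le_of_mem_span (by rintro _ ⟨i, -, rfl⟩; exact hζdeg i) hp
  have hwp : √(wForm hw p p).re ≤ √2 / ε :=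
    (sqrt_re_wForm_self_le hw hζw hζd hε hp).trans (mul_le_of_le_one_right (by positivity) hpd)
  have hc : 0 ≤ cConst n γ φ := Real.iSup_nonneg fun _ => Real.sqrt_nonneg _
  refine ⟨p, hdeg, hpd, supNorm_le (by positivity) fun x hx => ?_, rfl⟩
  calc ‖pf p x‖ ≤ √(wForm hw p p).re * √(∑ i ∈ range (n + 1), ‖pf (φ i) x‖ ^ 2) :=
        norm_pf_le_of_orthonormal (wForm hw) hφdeg hφorth hdeg x
    _ ≤ √2 / ε * cConst n γ φ := by
        gcongr
        exact le_iSup_of_continuousOn (g := fun x => √(∑ i ∈ range (n + 1), ‖pf (φ i) x‖ ^ 2))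
          isCompact_Icc (by fun_prop) hx
    _ = (ε / (√2 * cConst n γ φ))⁻¹ := by rw [inv_div]; ring

/-- `C₁ ≤ C(m,n,γ, ε/(√2 c_{n,γ,α,β}))`. -/
theorem stmt12 (α β γ : ℝ) (hα : -1 < α) (hβ : -1 < β) (hγ : 1 < γ)
    (m n : ℕ) (hn : 1 ≤ n) (hmn : n ≤ m)
    (ζ : Fin (n + 1) → Polynomial ℂ) (σ : Fin (n + 1) → ℝ) (hσ : ∀ i, 0 < σ i)
    (hζdeg : ∀ i, (ζ i).natDegree ≤ n)
    (hζspan : ∀ p : Polynomial ℂ, p.natDegree ≤ n → p ∈ Submodule.span ℂ (Set.range ζ))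
    (hζw : ∀ i j, wInner α β γ (pf (ζ i)) (pf (ζ j)) = if i = j then 1 else 0)
    (hζd : ∀ i j, discInner m (pf (ζ i)) (pf (ζ j)) =
      if i = j then (((σ i) ^ 2 : ℝ) : ℂ) else 0)
    (φ : ℕ → Polynomial ℂ) (hφdeg : ∀ i ≤ n, (φ i).natDegree = i)
    (hφorth : ∀ i ≤ n, ∀ j ≤ n,
      wInner α β γ (pf (φ i)) (pf (φ j)) = if i = j then 1 else 0)
    (ε : ℝ) (hε : 0 < ε) :
    C1const m n ζ σ ε ≤ Cquant m n γ (ε / (Real.sqrt 2 * cConst n γ φ)) :=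
  stmt12_general α β γ hα hβ hγ m n ζ σ hζdeg hζw hζd φ hφdeg hφorth ε hε
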